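/- Let φ_n(z) be as in the discrete Schrödinger recursion with real coefficients and define E(z) := φ_N(z) - i·φ_{N+1}(z) for a fixed N ≥ 1. Then for all z with Im z ≠ 0, (|E(z)|² - |E(conj z)|²)/(4·Im z) = Σ_{i=1}^{N} |φ_i(z)|² > 0; consequently |E(z)| > |E(conj z)| for Im z > 0, i.e., E is a Hermite–Biehler function. -/

import Mathlib

open Complex ComplexConjugate

/-!
Since the `b i` are real, `φ n (conj z) = conj (φ n z)`, so `‖E z‖² - ‖E (conj z)‖²` equals
`4 Im (φ (N+1) z · conj (φ N z))`. Multiplying the recursion by `conj (φ n z)` and taking imaginary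
parts telescopes this Wronskian to `Im z · ∑_{i=1}^N ‖φ i z‖²` (discrete Christoffel–Darboux at
`ξ = z`), and the sum is at least `‖φ 1 z‖² = 1`.
-/

theorem schrodinger_apply_conj (b : ℕ → ℝ) (φ : ℕ → ℂ → ℂ)
    (h0 : ∀ z : ℂ, φ 0 z = 0) (h1 : ∀ z : ℂ, φ 1 z = 1)
    (hrec : ∀ i : ℕ, 1 ≤ i → ∀ z : ℂ,
      φ (i + 1) z = (z - (b i : ℂ)) * φ i z - φ (i - 1) z) (n : ℕ) (z : ℂ) :
    φ n (conj z) = conj (φ n z) := by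
  induction n using Nat.twoStepInduction with
  | zero => simp [h0]
  | one => simp [h1]
  | more n ih ih1 =>
    rw [hrec (n + 1) (by omega), hrec (n + 1) (by omega), Nat.add_sub_cancel, ih, ih1]
    simp

theorem im_mul_conj_succ_eq_im_mul_sum_sq (b : ℕ → ℝ) (z : ℂ) (u : ℕ → ℂ) (hu0 : u 0 = 0)
    (hrec : ∀ i : ℕ, 1 ≤ i → u (i + 1) = (z - (b i : ℂ)) * u i - u (i - 1)) (n : ℕ) :
    (u (n + 1) * conj (u n)).im = z.im * ∑ i ∈ Finset.Icc 1 n, ‖u i‖ ^ 2 := by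
  induction n with
  | zero => simp [hu0]
  | succ n ih =>
    rw [Finset.sum_Icc_succ_top (by omega), hrec (n + 1) (by omega), Nat.add_sub_cancel]
    simp only [mul_im, mul_re, sub_re, sub_im, conj_re, conj_im, ofReal_re, ofReal_im,
      Complex.sq_norm, normSq_apply] at ih ⊢
    linear_combination ih

theorem norm_sub_I_mul_sq_sub_norm_conj_sub_I_mul_sq (a b : ℂ) :
    ‖a - I * b‖ ^ 2 - ‖conj a - I * conj b‖ ^ 2 = 4 * (b * conj a).im := by
  simp only [Complex.sq_norm, normSq_apply, sub_re, sub_im, mul_re, mul_im, I_re, I_im,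
    conj_re, conj_im]
  ring

/-- `E(z) = φ_N(z) - i φ_{N+1}(z)` is a Hermite–Biehler function. -/
theorem discrete_schrodinger_hermite_biehler
    (b : ℕ → ℝ) (φ : ℕ → ℂ → ℂ)
    (h0 : ∀ z : ℂ, φ 0 z = 0) (h1 : ∀ z : ℂ, φ 1 z = 1)
    (hrec : ∀ i : ℕ, 1 ≤ i → ∀ z : ℂ,
      φ (i + 1) z = (z - (b i : ℂ)) * φ i z - φ (i - 1) z)
    (N : ℕ) (hN : 1 ≤ N)
    (E : ℂ → ℂ) (hE : ∀ z : ℂ, E z = φ N z - I * φ (N + 1) z) :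
    ∀ z : ℂ, z.im ≠ 0 →
      ((‖E z‖ ^ 2 - ‖E (conj z)‖ ^ 2) / (4 * z.im) =
          ∑ i ∈ Finset.Icc 1 N, ‖φ i z‖ ^ 2) ∧
      (0 < ∑ i ∈ Finset.Icc 1 N, ‖φ i z‖ ^ 2) ∧
      (0 < z.im → ‖E (conj z)‖ < ‖E z‖) := by
  intro z hz
  set S := ∑ i ∈ Finset.Icc 1 N, ‖φ i z‖ ^ 2
  have hdiff : ‖E z‖ ^ 2 - ‖E (conj z)‖ ^ 2 = 4 * z.im * S := by
    rw [hE, hE, schrodinger_apply_conj b φ h0 h1 hrec, schrodinger_apply_conj b φ h0 h1 hrec,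
      norm_sub_I_mul_sq_sub_norm_conj_sub_I_mul_sq,
      im_mul_conj_succ_eq_im_mul_sum_sq b z (φ · z) (h0 z) (fun i hi ↦ hrec i hi z)]
    ring
  have hS : 0 < S :=
    calc (0 : ℝ) < ‖φ 1 z‖ ^ 2 := by simp [h1]
      _ ≤ S := Finset.single_le_sum (f := fun i ↦ ‖φ i z‖ ^ 2) (fun _ _ ↦ by positivity)
          (Finset.left_mem_Icc.mpr hN)
  refine ⟨by rw [hdiff]; field_simp, hS, fun him ↦ ?_⟩
  have hsq : ‖E (conj z)‖ ^ 2 < ‖E z‖ ^ 2 := by linarith [mul_pos him hS]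
  exact lt_of_pow_lt_pow_left₀ 2 (norm_nonneg _) hsq
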